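/- Let m, k_B, a, ε > 0 be constants. Let Θ, N, φ : ℝ³ → ℝ and u : ℝ³ → ℝ³ be differentiable fields with Θ(x) > 0 and 0 < N(x) < 1 for all x. Define ρ := m N a⁻³, β := 1/(k_B Θ), ζⁱ := −uⁱ/(k_B Θ), ξ := −m φ/(k_B Θ) − log N + log(1−N) + (3/2) log(2π m k_B Θ/ε²) + m|u|²/(2 k_B Θ), and fᵢ := −∂ᵢφ. Then for any differentiable pressure field Q : ℝ³ → ℝ, the entropy-production expression Σᵢ ζⁱ ρ fᵢ + Σⱼ (ρ uʲ/m) ∂ⱼξ + Σᵢⱼ (ρ uⁱ uʲ + δⁱʲ Q) ∂ⱼζⁱ + Σⱼ ρ uʲ (3 k_B Θ/(2m) + Q/ρ + |u|²/2 + φ) ∂ⱼβ + a⁻³ Σⱼ uʲ ∂ⱼN/(1−N) − a⁻³ log(1−N) Σⱼ ∂ⱼuʲ equals −(Q + k_B Θ a⁻³ log(1−N)) (Σⱼ ∂ⱼuʲ)/(k_B Θ) at every point. In particular, for the ideal-gas pressure Q = k_B Θ N a⁻³ = ρ k_B Θ/m, the entropy production equals −a⁻³ (N + log(1−N)) Σⱼ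 ∂ⱼuʲ, which is of second order in the density N. -/

import Mathlib

/-!
Differentiating `β`, `ζ` and `ξ` by the usual rules turns the entropy production into a rational
expression in the fields and their first derivatives, in which everything but the `div u` terms
cancels: the force term against the potential part of `∇ξ`, the kinetic parts of `∇ξ` and `∇ζ`
against the kinetic-energy flux, `(3/2) ∇Θ / Θ` against the internal-energy flux, and the two
`∇N` terms of `∇ξ` against `a⁻³ u · ∇N / (1 - N)`, because `N (1/N + 1/(1 - N)) = 1/(1 - N)`.
What is left is `-(Q - p) div u / (k_B Θ)` with `p = -k_B Θ a⁻³ log (1 - N)` the equilibrium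
pressure of the lattice gas; the ideal-gas pressure `k_B Θ N a⁻³` agrees with `p` only to first
order in `N`.
-/

open Real

/-- The partial derivative in the `j`-th coordinate direction of a scalar field on `ℝ³`. -/
noncomputable def pd (j : Fin 3) (f : (Fin 3 → ℝ) → ℝ) (x : Fin 3 → ℝ) : ℝ :=
  fderiv ℝ f x (Pi.single j 1)

/-- The entropy-production expression of the hard-sphere lattice gas in local thermodynamic
equilibrium, with an arbitrary pressure field `Q`. -/
noncomputable def entropyProduction (m kB a : ℝ)
    (Θ N φ Q ρ β ξ : (Fin 3 → ℝ) → ℝ) (u ζ f : (Fin 3 → ℝ) → Fin 3 → ℝ)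
    (x : Fin 3 → ℝ) : ℝ :=
  (∑ i, ζ x i * ρ x * f x i)
  + (∑ j, (ρ x * u x j / m) * pd j ξ x)
  + (∑ i, ∑ j, (ρ x * u x i * u x j + (if i = j then Q x else 0))
      * pd j (fun y => ζ y i) x)
  + (∑ j, ρ x * u x j
      * (3 * kB * Θ x / (2 * m) + Q x / ρ x + (∑ i, u x i ^ 2) / 2 + φ x)
      * pd j β x)
  + (a ^ 3)⁻¹ * (∑ j, u x j * pd j N x / (1 - N x))
  - (a ^ 3)⁻¹ * Real.log (1 - N x) * (∑ j, pd j (fun y => u y j) x)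

section PartialDerivative

variable {f g : (Fin 3 → ℝ) → ℝ} {x : Fin 3 → ℝ} {j : Fin 3}

lemma pd_const (c : ℝ) : pd j (fun _ => c) x = 0 := by simp [pd]

lemma pd_add (hf : DifferentiableAt ℝ f x) (hg : DifferentiableAt ℝ g x) :
    pd j (fun y => f y + g y) x = pd j f x + pd j g x := by
  simp [pd, fderiv_fun_add hf hg]

lemma pd_sub (hf : DifferentiableAt ℝ f x) (hg : DifferentiableAt ℝ g x) :
    pd j (fun y => f y - g y) x = pd j f x - pd j g x := by
  simp [pd, fderiv_fun_sub hf hg]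

lemma pd_neg : pd j (fun y => -f y) x = -pd j f x := by
  simp [pd]

lemma pd_mul (hf : DifferentiableAt ℝ f x) (hg : DifferentiableAt ℝ g x) :
    pd j (fun y => f y * g y) x = f x * pd j g x + g x * pd j f x := by
  simp [pd, fderiv_fun_mul hf hg]

lemma pd_pow (hf : DifferentiableAt ℝ f x) (n : ℕ) :
    pd j (fun y => f y ^ n) x = n * f x ^ (n - 1) * pd j f x := by
  simp [pd, fderiv_fun_pow n hf]

lemma pd_inv (hf : DifferentiableAt ℝ f x) (h : f x ≠ 0) :
    pd j (fun y => (f y)⁻¹) x = -pd j f x / f x ^ 2 := by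
  have := ((hasDerivAt_inv h).comp_hasFDerivAt x hf.hasFDerivAt).fderiv
  simp only [Function.comp_def] at this
  simp [pd, this, div_eq_inv_mul]

lemma pd_div (hf : DifferentiableAt ℝ f x) (hg : DifferentiableAt ℝ g x) (h : g x ≠ 0) :
    pd j (fun y => f y / g y) x = (pd j f x * g x - f x * pd j g x) / g x ^ 2 := by
  simp only [div_eq_mul_inv]
  rw [pd_mul hf (hg.fun_inv h), pd_inv hg h]
  field_simp
  ring

lemma pd_log (hf : DifferentiableAt ℝ f x) (h : f x ≠ 0) :
    pd j (fun y => Real.log (f y)) x = pd j f x / f x := by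
  simp [pd, fderiv.log hf h, div_eq_inv_mul]

end PartialDerivative

theorem entropyProduction_localEquilibrium_eq {m kB a ε : ℝ}
    (hm : m ≠ 0) (hkB : kB ≠ 0) (ha : a ≠ 0) (hε : ε ≠ 0)
    {Θ N φ Q : (Fin 3 → ℝ) → ℝ} {u : (Fin 3 → ℝ) → Fin 3 → ℝ} {x : Fin 3 → ℝ}
    (hΘ : DifferentiableAt ℝ Θ x) (hN : DifferentiableAt ℝ N x) (hφ : DifferentiableAt ℝ φ x)
    (hu : ∀ i, DifferentiableAt ℝ (fun y => u y i) x)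
    (hΘx : Θ x ≠ 0) (hN0 : N x ≠ 0) (hN1 : 1 - N x ≠ 0) :
    entropyProduction m kB a Θ N φ Q (fun x => m * N x / a ^ 3) (fun x => 1 / (kB * Θ x))
      (fun x => -(m * φ x) / (kB * Θ x) - Real.log (N x) + Real.log (1 - N x)
        + (3 / 2) * Real.log (2 * π * m * kB * Θ x / ε ^ 2)
        + m * (∑ i, u x i ^ 2) / (2 * kB * Θ x))
      u (fun x i => -(u x i) / (kB * Θ x)) (fun x i => -(pd i φ x)) x
      = -(Q x + kB * Θ x / a ^ 3 * Real.log (1 - N x))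
          * (∑ j, pd j (fun y => u y j) x) / (kB * Θ x) := by
  simp (disch := first | positivity | fun_prop (disch := first | assumption | positivity)) only
    [entropyProduction, pd_const, pd_add, pd_sub, pd_neg, pd_mul, pd_pow, pd_div, pd_log,
      Fin.sum_univ_three]
  simp only [Fin.isValue, Fin.reduceEq, reduceIte]
  field_simp
  ring

/-- **Entropy production with a general pressure field.**
For any differentiable pressure field `Q`, the entropy production equals
`-(Q + k_B Θ a⁻³ log (1 - N)) · (div u) / (k_B Θ)`; in particular for the ideal-gas
pressure `Q = k_B Θ N a⁻³` it equals `-a⁻³ (N + log (1 - N)) · div u`, of second order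
in the density `N`. -/
theorem entropy_production_general_pressure
    (m kB a ε : ℝ) (hm : 0 < m) (hkB : 0 < kB) (ha : 0 < a) (hε : 0 < ε)
    (Θ N φ : (Fin 3 → ℝ) → ℝ) (u : (Fin 3 → ℝ) → Fin 3 → ℝ)
    (hΘ : Differentiable ℝ Θ) (hN : Differentiable ℝ N) (hφ : Differentiable ℝ φ)
    (hu : ∀ i, Differentiable ℝ (fun x => u x i))
    (hΘpos : ∀ x, 0 < Θ x) (hN0 : ∀ x, 0 < N x) (hN1 : ∀ x, N x < 1)
    (ρ β ξ : (Fin 3 → ℝ) → ℝ) (ζ f : (Fin 3 → ℝ) → Fin 3 → ℝ)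
    (hρ : ρ = fun x => m * N x / a ^ 3)
    (hβ : β = fun x => 1 / (kB * Θ x))
    (hζ : ζ = fun x i => -(u x i) / (kB * Θ x))
    (hξ : ξ = fun x => -(m * φ x) / (kB * Θ x) - Real.log (N x) + Real.log (1 - N x)
      + (3 / 2) * Real.log (2 * π * m * kB * Θ x / ε ^ 2)
      + m * (∑ i, u x i ^ 2) / (2 * kB * Θ x))
    (hf : f = fun x i => -(pd i φ x)) :
    (∀ Q : (Fin 3 → ℝ) → ℝ, Differentiable ℝ Q → ∀ x,
      entropyProduction m kB a Θ N φ Q ρ β ξ u ζ f x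
        = -(Q x + kB * Θ x / a ^ 3 * Real.log (1 - N x))
            * (∑ j, pd j (fun y => u y j) x) / (kB * Θ x)) ∧
    (∀ x, entropyProduction m kB a Θ N φ (fun y => kB * Θ y * N y / a ^ 3) ρ β ξ u ζ f x
        = -(a ^ 3)⁻¹ * (N x + Real.log (1 - N x)) * (∑ j, pd j (fun y => u y j) x)) := by
  subst hρ hβ hζ hξ hf
  have hEP := fun Q x => entropyProduction_localEquilibrium_eq (Q := Q) hm.ne' hkB.ne' ha.ne'
    hε.ne' (hΘ x) (hN x) (hφ x) (fun i => hu i x) (hΘpos x).ne' (hN0 x).ne'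
    (sub_ne_zero.mpr (hN1 x).ne')
  refine ⟨fun Q _ x => hEP Q x, fun x => ?_⟩
  have hΘx := (hΘpos x).ne'
  rw [hEP]
  field_simp
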